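/- arXiv:1502.00422 — 4 statements merged into one kernel-verified Lean document; each statement's English description precedes it below -/
import Mathlib

section
/- Let F be a set and let p, q ≥ 1 be integers. Let 𝔛 be a finite set of p-tuples of elements of F, and let |𝔛| ⊆ F denote the set of all elements of F that occur as a component of some member of 𝔛. If #|𝔛| > p(q−1), then there exist members 𝐱₁, …, 𝐱_q ∈ 𝔛 and indices i(1), …, i(q) ∈ {1,…,p} such that for every 1 ≤ j ≤ q the component 𝐱_j(i(j)) does not occur as a component of 𝐱_{j′} for any j′ < j; that is, the array (𝐱₁,…,𝐱_q) is independent. -/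
/-! Greedy choice: once `𝐱₁, …, 𝐱_m` are chosen, their components form a set of at most
`p m` elements; if `|𝔛|` is larger, some member of `𝔛` has a component outside it, and that
member can be appended as `𝐱_{m+1}`. -/

open Finset

section

variable {ι F : Type*}

def IsIndependentArray {m : ℕ} (x : Fin m → ι → F) (ind : Fin m → ι) : Prop :=
  ∀ j j' : Fin m, j' < j → ∀ i', x j' i' ≠ x j (ind j)

theorem IsIndependentArray.snoc {m : ℕ} {x : Fin m → ι → F} {ind : Fin m → ι}
    (hx : IsIndependentArray x ind) {y : ι → F} {i : ι} (hy : ∀ j i', x j i' ≠ y i) :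
    IsIndependentArray (Fin.snoc (α := fun _ => ι → F) x y) (Fin.snoc (α := fun _ => ι) ind i) := by
  intro j j' hj'j i'
  obtain ⟨k', rfl⟩ := Fin.exists_castSucc_eq.mpr (Fin.ne_last_of_lt hj'j)
  induction j using Fin.lastCases with
  | last => simpa using hy k' i'
  | cast k => simpa using hx k k' (Fin.castSucc_lt_castSucc_iff.mp hj'j) i'

section

variable [Fintype ι] [DecidableEq F]

theorem card_biUnion_image_le {m : ℕ} (x : Fin m → ι → F) :
    (univ.biUnion fun j => univ.image (x j)).card ≤ Fintype.card ι * m := by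
  calc (univ.biUnion fun j => univ.image (x j)).card
      ≤ (univ : Finset (Fin m)).card * Fintype.card ι :=
        card_biUnion_le_card_mul _ _ _ fun j _ => card_image_le
    _ = Fintype.card ι * m := by rw [card_univ, Fintype.card_fin, mul_comm]

theorem exists_mem_apply_notMem_of_card_lt {𝔛 : Finset (ι → F)} {T : Finset F}
    (hT : T.card < (𝔛.biUnion fun x => univ.image x).card) :
    ∃ y ∈ 𝔛, ∃ i, y i ∉ T := by
  obtain ⟨c, hc𝔛, hcT⟩ := exists_mem_notMem_of_card_lt_card hT
  simp only [mem_biUnion, mem_image, mem_univ, true_and] at hc𝔛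
  obtain ⟨y, hy, i, rfl⟩ := hc𝔛
  exact ⟨y, hy, i, hcT⟩

theorem exists_isIndependentArray_of_mul_lt_card (𝔛 : Finset (ι → F)) (q : ℕ)
    (h : Fintype.card ι * (q - 1) < (𝔛.biUnion fun x => univ.image x).card) :
    ∃ (x : Fin q → ι → F) (ind : Fin q → ι), (∀ j, x j ∈ 𝔛) ∧ IsIndependentArray x ind := by
  induction q with
  | zero => exact ⟨Fin.elim0, Fin.elim0, fun j => j.elim0, fun j => j.elim0⟩
  | succ m ih =>
    obtain ⟨x, ind, hx𝔛, hx⟩ :=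
      ih (lt_of_le_of_lt (Nat.mul_le_mul_left _ (Nat.sub_le m 1)) h)
    obtain ⟨y, hy𝔛, i, hyi⟩ := exists_mem_apply_notMem_of_card_lt
      (lt_of_le_of_lt (card_biUnion_image_le x) h)
    refine ⟨Fin.snoc x y, Fin.snoc ind i, Fin.forall_fin_succ'.mpr ⟨by simpa using hx𝔛, by simpa⟩,
      hx.snoc fun j i' hji' => hyi ?_⟩
    exact mem_biUnion.mpr ⟨j, mem_univ _, mem_image.mpr ⟨i', mem_univ _, hji'⟩⟩

end

end

theorem stmt7_general {F : Type*} [DecidableEq F] (p q : ℕ)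
    (𝔛 : Finset (Fin p → F))
    (h : p * (q - 1) < (𝔛.biUnion fun x => Finset.image x Finset.univ).card) :
    ∃ (x : Fin q → Fin p → F) (ind : Fin q → Fin p),
      (∀ j, x j ∈ 𝔛) ∧
        ∀ j j' : Fin q, j' < j → ∀ i' : Fin p, x j' i' ≠ x j (ind j) :=
  exists_isIndependentArray_of_mul_lt_card 𝔛 q (by rwa [Fintype.card_fin])

/-- Lemma `lm:findingS` of the paper: if a finite set `𝔛` of `p`-tuples of
elements of `F` has more than `p(q-1)` elements of `F` occurring as components, then one can
select an *independent* (ordered) array `𝐱₁, …, 𝐱_q` of members of `𝔛`: for each `j` some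
component `𝐱_j(i(j))` does not occur as a component of any earlier `𝐱_{j'}`, `j' < j`. -/
theorem stmt7 {F : Type*} [DecidableEq F] (p q : ℕ) (hp : 1 ≤ p) (hq : 1 ≤ q)
    (𝔛 : Finset (Fin p → F))
    (h : p * (q - 1) < (𝔛.biUnion fun x => Finset.image x Finset.univ).card) :
    ∃ (x : Fin q → Fin p → F) (ind : Fin q → Fin p),
      (∀ j, x j ∈ 𝔛) ∧
        ∀ j j' : Fin q, j' < j → ∀ i' : Fin p, x j' i' ≠ x j (ind j) :=
  stmt7_general p q 𝔛 h
end

section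
/- Let ℓ ≥ 2, p ≥ 1 and q ≥ 1 be integers. There exists n₀ ≥ 1 (depending only on ℓ, p, q) such that for every δ > 0 and every integer n ≥ n₀ there exist an integer K ≥ 1 and C^∞ functions g₁, …, g_K : S¹ → ℝ with the following property. For every x ∈ S¹ ∖ Per_δ(τ,n), every integer m ≥ 1, and every array (𝐱̃₁, …, 𝐱̃_q) of q elements of (τ^{−mn}(x))^p such that the array (𝐱₁,…,𝐱_q) with 𝐱_j = (τ^{(m−1)n}(𝐱̃_j(1)), …, τ^{(m−1)n}(𝐱̃_j(p))) ∈ (τ^{−n}(x))^p is independent, there exist indices k(1), …, k(q) ∈ {1,…,K} such that the q×q real matrix whose (j, j′) entry is ℓ^{−mn} ∑_{i=1}^p (g_{k(j′)}^{(mn)})′(𝐱̃_j(i)) has determinant ≥ 1. (This matrix entry equals ∂Ŝ(𝐱̃_j, mn; f_𝐬)/∂s_{k(j′)}, which is independent of f and 𝐬.) -/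
/-!
For `N = ℓⁿ`, let `g_k` be the periodic primitive of `3N (ψ_k - ∫ ψ_k)`, where `ψ_k` is a smooth
bump of width `ε ≪ N⁻¹` centred at `k / K`, with `K⁻¹ ≤ ε`. By the chain rule,
`ℓ^{-mn} (g^{(mn)})′(z) = ℓ^{-mn} ∑_{r < mn} ℓʳ g′(τʳ z)`. For column `j′` pick the bump centred
near `y_{j′} = 𝐱_{j′}(i(j′)) ∈ τ⁻ⁿ(x)`. The layer `r = (m-1)n` contributes `3` if
`τ^{(m-1)n} z = y_{j′}` and `0` otherwise, because distinct points of `τ⁻ⁿ(x)` are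
`N⁻¹`-separated. The layers `(m-2)n ≤ r < mn`, `r ≠ (m-1)n`, miss the bump: a hit would give a
point `3Nε`-close to `x` mapped onto `x` by some `τᵏ`, `1 ≤ k ≤ n`, hence a periodic point
`6Nε ≤ δ`-close to `x`. The deeper layers and the mean of `g′` contribute `O(N⁻¹ + Nε)`.
So the matrix is `3T + O(p (N⁻¹ + Nε))`, where `T_{jj′}` counts the `i` with
`𝐱_j(i) = y_{j′}`; by independence `T` is lower triangular with diagonal `≥ 1`, and a nearly
lower triangular matrix with diagonal `≥ 2` has determinant `≥ 1`.
-/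

noncomputable section
open MeasureTheory

/-- The circle `S¹ = ℝ/ℤ`. -/
abbrev S1 : Type := AddCircle (1 : ℝ)

/-- The angle-multiplying map `τ(x) = ℓx mod ℤ`. -/
def tauC (ℓ : ℕ) : S1 → S1 := fun x => ℓ • x

/-- The Birkhoff sum `f^{(n)}(x) = ∑_{i=0}^{n-1} f(τ^i x)`. -/
def birkC (ℓ : ℕ) (f : S1 → ℝ) (n : ℕ) (x : S1) : ℝ :=
  ∑ i ∈ Finset.range n, f ((tauC ℓ)^[i] x)

/-- The derivative of a function on the circle, computed via its periodic lift at the canonical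
representative in `[0,1)`. -/
def circDeriv (g : S1 → ℝ) (x : S1) : ℝ :=
  deriv (fun t : ℝ => g (t : S1)) ((AddCircle.equivIco 1 0 x : ℝ))

/-- `n(x,t;f) = max{n ≥ 0 : f^{(n)}(x) ≤ t}`. -/
def nOf (ℓ : ℕ) (f : S1 → ℝ) (x : S1) (t : ℝ) : ℕ := sSup {n : ℕ | birkC ℓ f n x ≤ t}

/-- The phase space `X_f = {(x,y) : 0 ≤ y < f(x)}` of the suspension semiflow. -/
def Xf (ℓ : ℕ) (f : S1 → ℝ) : Set (S1 × ℝ) := {z | 0 ≤ z.2 ∧ z.2 < f z.1}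

/-- The time-`t` map of the suspension semiflow of `τ` with roof function `f`. -/
def Tf (ℓ : ℕ) (f : S1 → ℝ) (t : ℝ) (z : S1 × ℝ) : S1 × ℝ :=
  ((tauC ℓ)^[nOf ℓ f z.1 (z.2 + t)] z.1,
    z.2 + t - birkC ℓ f (nOf ℓ f z.1 (z.2 + t)) z.1)

/-- The set of periodic points of `τ` with period `≤ n`. -/
def PerSet (ℓ n : ℕ) : Set S1 := {x | ∃ k, 1 ≤ k ∧ k ≤ n ∧ (tauC ℓ)^[k] x = x}

/-- The open `δ`-neighborhood of `Per(τ,n)`. -/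
def PerNbhd (ℓ n : ℕ) (δ : ℝ) : Set S1 := {x | ∃ y ∈ PerSet ℓ n, dist x y < δ}

open Function Real

namespace AngleMultiplying

lemma tauC_iterate_apply (ℓ r : ℕ) (x : S1) : (tauC ℓ)^[r] x = (ℓ ^ r) • x := by
  induction r with
  | zero => simp
  | succ r ih => rw [iterate_succ_apply', ih, tauC, smul_smul, pow_succ']

lemma tauC_iterate_coe (ℓ r : ℕ) (t : ℝ) :
    (tauC ℓ)^[r] (t : S1) = (((ℓ : ℝ) ^ r * t : ℝ) : S1) := by
  rw [tauC_iterate_apply, ← AddCircle.coe_nsmul, nsmul_eq_mul]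
  push_cast
  rfl

lemma dist_coe_le (s t : ℝ) : dist (s : S1) t ≤ |s - t| := by
  rw [dist_eq_norm, ← AddCircle.coe_sub, UnitAddCircle.norm_eq]
  simpa using round_le (s - t) 0

lemma exists_coe_eq_sub_abs_eq_dist (x y : S1) :
    ∃ e : ℝ, (e : S1) = x - y ∧ |e| = dist x y := by
  obtain ⟨t, ht⟩ := QuotientAddGroup.mk_surjective (x - y)
  refine ⟨t - round t, ?_, ?_⟩
  · rw [AddCircle.coe_sub, ← ht, sub_eq_self, AddCircle.coe_eq_zero_iff]
    exact ⟨round t, by simp⟩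
  · rw [dist_eq_norm, ← ht]
    exact UnitAddCircle.norm_eq.symm

lemma dist_tauC_iterate_le (ℓ r : ℕ) (x y : S1) :
    dist ((tauC ℓ)^[r] x) ((tauC ℓ)^[r] y) ≤ (ℓ : ℝ) ^ r * dist x y := by
  have hlip : LipschitzWith ℓ (tauC ℓ) := LipschitzWith.of_dist_le_mul fun x y => by
    rw [dist_eq_norm, dist_eq_norm, tauC, tauC, ← smul_sub]
    simpa using norm_nsmul_le (a := x - y) (n := ℓ)
  simpa using (hlip.iterate r).dist_le_mul x y

lemma inv_pow_le_dist_of_iterate_eq {ℓ n : ℕ} (hℓ : 0 < ℓ) {x y : S1} (hxy : x ≠ y)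
    (h : (tauC ℓ)^[n] x = (tauC ℓ)^[n] y) : ((ℓ : ℝ) ^ n)⁻¹ ≤ dist x y := by
  obtain ⟨e, he, hed⟩ := exists_coe_eq_sub_abs_eq_dist x y
  have hN : (0 : ℝ) < (ℓ : ℝ) ^ n := by positivity
  obtain ⟨k, hk⟩ : ∃ k : ℤ, (k : ℝ) = (ℓ : ℝ) ^ n * e := by
    have : (((ℓ : ℝ) ^ n * e : ℝ) : S1) = 0 := by
      rw [← tauC_iterate_coe, he, tauC_iterate_apply, smul_sub, ← tauC_iterate_apply,
        ← tauC_iterate_apply, h, sub_self]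
    simpa using (AddCircle.coe_eq_zero_iff (1 : ℝ)).1 this
  have hk0 : k ≠ 0 := by
    rintro rfl
    have : e = 0 := by simpa [hN.ne'] using hk
    exact hxy (sub_eq_zero.1 (by rw [← he, this]; rfl))
  have hk1 : (1 : ℝ) ≤ |(k : ℝ)| := by exact_mod_cast Int.one_le_abs hk0
  rw [← hed, inv_le_iff_one_le_mul₀ hN]
  calc 1 ≤ |(k : ℝ)| := hk1
    _ = |e| * (ℓ : ℝ) ^ n := by rw [hk, abs_mul, abs_of_pos hN, mul_comm]

/-- If `τᵏ (x + e) = x`, then `τᵏ` fixes `x + ℓᵏ e / (ℓᵏ - 1)`. -/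
lemma mem_perNbhd_of_dist_lt {ℓ n k : ℕ} {ρ δ : ℝ} (hℓ : 2 ≤ ℓ) (hk : 1 ≤ k) (hkn : k ≤ n)
    {w x : S1} (hw : (tauC ℓ)^[k] w = x) (hwx : dist w x < ρ) (hρ : 2 * ρ ≤ δ) :
    x ∈ PerNbhd ℓ n δ := by
  obtain ⟨e, he, hed⟩ := exists_coe_eq_sub_abs_eq_dist w x
  set L : ℝ := (ℓ : ℝ) ^ k
  have hL : 2 ≤ L := by
    calc (2 : ℝ) ≤ ℓ := by exact_mod_cast hℓ
      _ ≤ L := le_self_pow₀ (by norm_cast; omega) (by omega)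
  have hx : (ℓ ^ k) • x = x - ((L * e : ℝ) : S1) := by
    have hw' : w = x + (e : S1) := by rw [he]; abel
    rw [eq_sub_iff_add_eq, ← tauC_iterate_coe, tauC_iterate_apply, ← smul_add, ← hw',
      ← tauC_iterate_apply, hw]
  refine ⟨x + ((L * e / (L - 1) : ℝ) : S1), ⟨k, hk, hkn, ?_⟩, ?_⟩
  · rw [tauC_iterate_apply, smul_add, hx, ← AddCircle.coe_nsmul, sub_add_eq_add_sub,
      add_sub_assoc, ← AddCircle.coe_sub]
    have hL1 : L - 1 ≠ 0 := by linarith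
    rw [nsmul_eq_mul, Nat.cast_pow]
    congr 2
    field_simp
    ring
  · rw [dist_self_add_right]
    calc ‖((L * e / (L - 1) : ℝ) : S1)‖ ≤ |L * e / (L - 1)| := by
          simpa using dist_coe_le (L * e / (L - 1)) 0
      _ = L / (L - 1) * |e| := by
          rw [mul_div_right_comm, abs_mul, abs_of_pos (div_pos (by linarith) (by linarith))]
      _ ≤ 2 * |e| := by
          gcongr
          rw [div_le_iff₀ (by linarith)]
          linarith
      _ < δ := by linarith [hed ▸ hwx]

section

-- `cos (2π (t - c))` is a smooth decreasing function of the circle distance from `t` to `c`.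
def bump (ε c t : ℝ) : ℝ :=
  smoothTransition ((cos (2 * π * (t - c)) - cos (2 * π * (2 * ε))) /
    (cos (2 * π * ε) - cos (2 * π * (2 * ε))))

lemma bump_contDiff (ε c : ℝ) : ContDiff ℝ (⊤ : ℕ∞) (bump ε c) :=
  smoothTransition.contDiff.comp
    (((contDiff_cos.comp (by fun_prop)).sub contDiff_const).div_const _)

lemma bump_periodic (ε c : ℝ) : Periodic (bump ε c) 1 := by
  intro t
  simp only [bump, add_sub_right_comm t 1 c, mul_add, mul_one, cos_add_two_pi]

def circleBump (ε c : ℝ) : S1 → ℝ := (bump_periodic ε c).lift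

variable {ε c : ℝ}

lemma circleBump_coe (t : ℝ) : circleBump ε c t = bump ε c t := rfl

lemma circleBump_nonneg (x : S1) : 0 ≤ circleBump ε c x := by
  induction x using QuotientAddGroup.induction_on with
  | H t => exact smoothTransition.nonneg _

lemma circleBump_le_one (x : S1) : circleBump ε c x ≤ 1 := by
  induction x using QuotientAddGroup.induction_on with
  | H t => exact smoothTransition.le_one _

lemma cos_two_pi_mul_sub_eq (t c : ℝ) :
    cos (2 * π * (t - c)) = cos (2 * π * dist (t : S1) c) := by
  rw [dist_eq_norm, ← AddCircle.coe_sub, UnitAddCircle.norm_eq, ← abs_of_pos two_pi_pos,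
    ← abs_mul, cos_abs, abs_of_pos two_pi_pos,
    show 2 * π * (t - c - round (t - c)) = 2 * π * (t - c) - round (t - c) * (2 * π) by ring,
    cos_sub_int_mul_two_pi]

lemma cos_le_cos_two_pi_mul {a b : ℝ} (ha : 0 ≤ a) (hab : a ≤ b) (hb : b ≤ 1 / 2) :
    cos (2 * π * b) ≤ cos (2 * π * a) :=
  cos_le_cos_of_nonneg_of_le_pi (by positivity) (by nlinarith [pi_pos]) (by gcongr)

lemma dist_le_half (x y : S1) : dist x y ≤ 1 / 2 := by
  simpa [dist_eq_norm] using AddCircle.norm_le_half_period (1 : ℝ) (x := x - y) one_ne_zero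

lemma cos_sub_cos_pos (hε : 0 < ε) (hε4 : ε ≤ 1 / 4) :
    0 < cos (2 * π * ε) - cos (2 * π * (2 * ε)) := by
  have := cos_lt_cos_of_nonneg_of_le_pi (by positivity) (by nlinarith [pi_pos])
    (by nlinarith [pi_pos] : 2 * π * ε < 2 * π * (2 * ε))
  linarith

lemma circleBump_eq_one (hε : 0 < ε) (hε4 : ε ≤ 1 / 4) {x : S1} (h : dist x c ≤ ε) :
    circleBump ε c x = 1 := by
  induction x using QuotientAddGroup.induction_on with
  | H t =>
    refine smoothTransition.one_of_one_le ?_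
    rw [le_div_iff₀ (cos_sub_cos_pos hε hε4), one_mul, cos_two_pi_mul_sub_eq]
    linarith [cos_le_cos_two_pi_mul dist_nonneg h (by linarith)]

lemma dist_lt_of_circleBump_ne_zero (hε : 0 < ε) (hε4 : ε ≤ 1 / 4) {x : S1}
    (h : circleBump ε c x ≠ 0) : dist x c < 2 * ε := by
  induction x using QuotientAddGroup.induction_on with
  | H t =>
    by_contra! hfar
    refine h (smoothTransition.zero_of_nonpos (div_nonpos_of_nonpos_of_nonneg ?_
      (cos_sub_cos_pos hε hε4).le))
    rw [cos_two_pi_mul_sub_eq]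
    linarith [cos_le_cos_two_pi_mul (by positivity) hfar (dist_le_half _ _)]

def bumpMass (ε c : ℝ) : ℝ := ∫ x : S1, circleBump ε c x

lemma bumpMass_nonneg : 0 ≤ bumpMass ε c :=
  integral_nonneg circleBump_nonneg

lemma bumpMass_le (hε : 0 < ε) (hε4 : ε ≤ 1 / 4) : bumpMass ε c ≤ 4 * ε := by
  have hsupp : ∀ x ∉ Metric.closedBall (c : S1) (2 * ε), circleBump ε c x = 0 := fun x hx => by
    by_contra h
    exact hx (Metric.mem_closedBall.2 (dist_lt_of_circleBump_ne_zero hε hε4 h).le)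
  calc bumpMass ε c = ∫ x in Metric.closedBall (c : S1) (2 * ε), circleBump ε c x :=
        (setIntegral_eq_integral_of_forall_compl_eq_zero hsupp).symm
    _ ≤ ‖∫ x in Metric.closedBall (c : S1) (2 * ε), circleBump ε c x‖ := le_norm_self _
    _ ≤ 1 * volume.real (Metric.closedBall (c : S1) (2 * ε)) :=
        norm_setIntegral_le_of_norm_le_const (measure_lt_top _ _) fun x _ => by
          rw [Real.norm_of_nonneg (circleBump_nonneg x)]
          exact circleBump_le_one x
    _ ≤ 4 * ε := by
        rw [one_mul, measureReal_def, AddCircle.volume_closedBall,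
          ENNReal.toReal_ofReal (by positivity)]
        linarith [min_le_right (1 : ℝ) (2 * (2 * ε))]

end

section

variable {A ε c : ℝ}

def bumpPrimitive (A ε c t : ℝ) : ℝ :=
  A * (∫ s in (0 : ℝ)..t, bump ε c s) - A * bumpMass ε c * t

lemma hasDerivAt_bumpPrimitive (t : ℝ) :
    HasDerivAt (bumpPrimitive A ε c) (A * (circleBump ε c t - bumpMass ε c)) t := by
  have hcont := (bump_contDiff ε c).continuous
  have hint : HasDerivAt (fun t => ∫ s in (0 : ℝ)..t, bump ε c s) (bump ε c t) t :=
    intervalIntegral.integral_hasDerivAt_right (hcont.intervalIntegrable _ _)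
      hcont.aestronglyMeasurable.stronglyMeasurableAtFilter hcont.continuousAt
  rw [circleBump_coe, mul_sub, ← mul_one (A * bumpMass ε c)]
  exact (hint.const_mul A).sub ((hasDerivAt_id t).const_mul (A * bumpMass ε c))

lemma bumpPrimitive_periodic (A ε c : ℝ) : Periodic (bumpPrimitive A ε c) 1 := by
  intro t
  have hint := (bump_contDiff ε c).continuous.intervalIntegrable (μ := volume)
  have hmass : ∫ s in t..t + 1, bump ε c s = bumpMass ε c :=
    AddCircle.intervalIntegral_preimage 1 t (circleBump ε c)
  have hsplit : (∫ s in (0 : ℝ)..t, bump ε c s) + ∫ s in t..t + 1, bump ε c s =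
      ∫ s in (0 : ℝ)..t + 1, bump ε c s :=
    intervalIntegral.integral_add_adjacent_intervals (hint 0 t) (hint t (t + 1))
  rw [hmass] at hsplit
  simp only [bumpPrimitive]
  linear_combination -A * hsplit

lemma bumpPrimitive_contDiff : ContDiff ℝ (⊤ : ℕ∞) (bumpPrimitive A ε c) := by
  rw [contDiff_infty_iff_deriv]
  refine ⟨fun t => (hasDerivAt_bumpPrimitive t).differentiableAt, ?_⟩
  have hderiv :
      deriv (bumpPrimitive A ε c) = fun t : ℝ => A * (circleBump ε c t - bumpMass ε c) :=
    funext fun t : ℝ => (hasDerivAt_bumpPrimitive t).deriv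
  rw [hderiv]
  exact contDiff_const.mul ((bump_contDiff ε c).sub contDiff_const)

def circlePrimitive (A ε c : ℝ) : S1 → ℝ := (bumpPrimitive_periodic A ε c).lift

lemma circDeriv_birkC_lift {G : ℝ → ℝ} (hG : Periodic G 1) {H : S1 → ℝ}
    (hd : ∀ t : ℝ, HasDerivAt G (H t) t) (ℓ N : ℕ) (z : S1) :
    circDeriv (birkC ℓ hG.lift N) z =
      ∑ r ∈ Finset.range N, (ℓ : ℝ) ^ r * H ((tauC ℓ)^[r] z) := by
  set u : ℝ := (AddCircle.equivIco 1 0 z : ℝ)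
  have hu : (u : S1) = z := (AddCircle.equivIco 1 0).symm_apply_apply z
  have hsum : (fun t : ℝ => birkC ℓ hG.lift N t) =
      fun t => ∑ r ∈ Finset.range N, G ((ℓ : ℝ) ^ r * t) := by
    funext t
    simp only [birkC, tauC_iterate_coe, Periodic.lift_coe]
  rw [circDeriv, hsum]
  refine (HasDerivAt.fun_sum fun r _ => ?_).deriv
  rw [show (tauC ℓ)^[r] z = (((ℓ : ℝ) ^ r * u : ℝ) : S1) by rw [← tauC_iterate_coe, hu],
    mul_comm]
  exact (hd _).comp u (hasDerivAt_const_mul _)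

end

section

variable {ℓ n : ℕ} {ε δ c : ℝ} {x y a : S1}

/-- If the bump around a point `y ∈ τ⁻ⁿ x` met a point `a ∈ τ⁻ˢ x` with `s ≠ n`, `s ≤ 2n`, then
`τ^|s-n|` would map a point `3ℓⁿε`-close to `x` onto `x`. -/
lemma circleBump_eq_zero_of_iterate_eq (hℓ : 2 ≤ ℓ) (hε : 0 < ε) (hε4 : ε ≤ 1 / 4)
    (hεδ : 6 * (ℓ : ℝ) ^ n * ε ≤ δ) (hx : x ∉ PerNbhd ℓ n δ) (hy : (tauC ℓ)^[n] y = x)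
    (hc : dist y c ≤ ε) {s : ℕ} (ha : (tauC ℓ)^[s] a = x) (hs : 1 ≤ s) (hs2 : s ≤ 2 * n)
    (hsn : s ≠ n) : circleBump ε c a = 0 := by
  by_contra hne
  have hay : dist a y < 3 * ε := by
    linarith [dist_triangle_right a y c, dist_lt_of_circleBump_ne_zero hε hε4 hne]
  have hclose : ∀ k ≤ n, (ℓ : ℝ) ^ k * dist a y < 3 * (ℓ : ℝ) ^ n * ε := fun k hk => by
    have hℓk : (ℓ : ℝ) ^ k ≤ (ℓ : ℝ) ^ n := pow_le_pow_right₀ (by norm_cast; omega) hk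
    nlinarith [pow_pos (by norm_cast; omega : (0 : ℝ) < ℓ) k]
  have hρ : 2 * (3 * (ℓ : ℝ) ^ n * ε) ≤ δ := by linarith
  rcases lt_or_gt_of_ne hsn with hlt | hgt
  · refine hx (mem_perNbhd_of_dist_lt hℓ (k := n - s) (w := (tauC ℓ)^[s] y) (by omega) (by omega)
      ?_ ?_ hρ)
    · rw [← iterate_add_apply, Nat.sub_add_cancel hlt.le, hy]
    · calc dist ((tauC ℓ)^[s] y) x = dist ((tauC ℓ)^[s] a) ((tauC ℓ)^[s] y) := by
            rw [ha, dist_comm]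
        _ ≤ (ℓ : ℝ) ^ s * dist a y := dist_tauC_iterate_le ℓ s a y
        _ < 3 * (ℓ : ℝ) ^ n * ε := hclose s hlt.le
  · refine hx (mem_perNbhd_of_dist_lt hℓ (k := s - n) (w := (tauC ℓ)^[n] a) (by omega) (by omega)
      ?_ ?_ hρ)
    · rw [← iterate_add_apply, Nat.sub_add_cancel hgt.le, ha]
    · calc dist ((tauC ℓ)^[n] a) x = dist ((tauC ℓ)^[n] a) ((tauC ℓ)^[n] y) := by rw [hy]
        _ ≤ (ℓ : ℝ) ^ n * dist a y := dist_tauC_iterate_le ℓ n a y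
        _ < 3 * (ℓ : ℝ) ^ n * ε := hclose n le_rfl

lemma circleBump_eq_ite (hℓ : 0 < ℓ) (hε : 0 < ε) (hε4 : ε ≤ 1 / 4)
    (hεn : 3 * ε < ((ℓ : ℝ) ^ n)⁻¹) (ha : (tauC ℓ)^[n] a = x) (hy : (tauC ℓ)^[n] y = x)
    (hc : dist y c ≤ ε) : circleBump ε c a = if a = y then 1 else 0 := by
  split_ifs with hay
  · exact circleBump_eq_one hε hε4 (hay ▸ hc)
  · by_contra hne
    have hsep := inv_pow_le_dist_of_iterate_eq hℓ hay (ha.trans hy.symm)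
    linarith [dist_triangle a c y, dist_comm y (c : S1),
      dist_lt_of_circleBump_ne_zero hε hε4 hne]

end

lemma sum_range_pow_le_pow {ℓ : ℝ} (hℓ : 2 ≤ ℓ) (R : ℕ) :
    ∑ r ∈ Finset.range R, ℓ ^ r ≤ ℓ ^ R := by
  induction R with
  | zero => simp
  | succ R ih =>
    rw [Finset.sum_range_succ, pow_succ]
    nlinarith [pow_nonneg (by linarith : (0 : ℝ) ≤ ℓ) R]

lemma sub_one_mul_add_self {m : ℕ} (hm : 1 ≤ m) (n : ℕ) : (m - 1) * n + n = m * n := by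
  rw [Nat.sub_one_mul, Nat.sub_add_cancel (Nat.le_mul_of_pos_left n hm)]

section

variable {ℓ n m : ℕ} {ε δ c : ℝ} {x y z : S1}

lemma abs_circDeriv_birkC_sub_le (hℓ : 2 ≤ ℓ) (hn : 1 ≤ n) (hm : 1 ≤ m) (hε : 0 < ε)
    (hε4 : ε ≤ 1 / 4) (hεδ : 6 * (ℓ : ℝ) ^ n * ε ≤ δ) (hεn : 3 * ε < ((ℓ : ℝ) ^ n)⁻¹)
    (hx : x ∉ PerNbhd ℓ n δ) (hy : (tauC ℓ)^[n] y = x) (hc : dist y c ≤ ε)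
    (hz : (tauC ℓ)^[m * n] z = x) :
    |((ℓ : ℝ) ^ (m * n))⁻¹ *
        circDeriv (birkC ℓ (circlePrimitive (3 * (ℓ : ℝ) ^ n) ε c) (m * n)) z -
      3 * if (tauC ℓ)^[(m - 1) * n] z = y then 1 else 0| ≤
      3 * ((ℓ : ℝ) ^ n)⁻¹ + 12 * (ℓ : ℝ) ^ n * ε := by
  set N : ℝ := (ℓ : ℝ) ^ n
  set L : ℝ := (ℓ : ℝ) ^ (m * n)
  set r₀ := (m - 1) * n
  set b : ℝ := if (tauC ℓ)^[r₀] z = y then 1 else 0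
  set F : ℕ → ℝ := fun r => (ℓ : ℝ) ^ r * circleBump ε c ((tauC ℓ)^[r] z)
  set tail := ∑ r ∈ Finset.range (m * n - 2 * n), F r
  set mean := bumpMass ε c * ∑ r ∈ Finset.range (m * n), (ℓ : ℝ) ^ r
  have hℓ0 : (0 : ℝ) < ℓ := by norm_cast; omega
  have hN : 0 < N := by positivity
  have hr₀ : r₀ + n = m * n := sub_one_mul_add_self hm n
  have hNL : (ℓ : ℝ) ^ r₀ * N = L := by rw [← pow_add, hr₀]
  have hderiv : circDeriv (birkC ℓ (circlePrimitive (3 * N) ε c) (m * n)) z =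
      3 * N * (∑ r ∈ Finset.range (m * n), F r) - 3 * N * mean := by
    rw [circlePrimitive,
      circDeriv_birkC_lift (H := fun x => 3 * N * (circleBump ε c x - bumpMass ε c)) _
        hasDerivAt_bumpPrimitive]
    simp only [mean, Finset.mul_sum, ← Finset.sum_sub_distrib]
    exact Finset.sum_congr rfl fun r _ => by ring
  have hsplit : ∑ r ∈ Finset.range (m * n), F r = F r₀ + tail := by
    rw [← Finset.sum_insert (s := Finset.range (m * n - 2 * n)) (by simp; omega)]
    refine (Finset.sum_subset (fun r hr => ?_) fun r hr hr' => ?_).symm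
    · rw [Finset.mem_insert, Finset.mem_range] at hr
      rw [Finset.mem_range]
      omega
    · simp only [Finset.mem_insert, Finset.mem_range, not_or] at hr hr'
      have ha : (tauC ℓ)^[m * n - r] ((tauC ℓ)^[r] z) = x := by
        rw [← iterate_add_apply, Nat.sub_add_cancel hr.le, hz]
      simp only [F, circleBump_eq_zero_of_iterate_eq hℓ hε hε4 hεδ hx hy hc ha (by omega)
        (by omega) (by omega), mul_zero]
  have hFr₀ : F r₀ = (ℓ : ℝ) ^ r₀ * b := by
    have ha : (tauC ℓ)^[n] ((tauC ℓ)^[r₀] z) = x := by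
      rw [← iterate_add_apply, add_comm, hr₀, hz]
    simp only [F, b, circleBump_eq_ite (by omega) hε hε4 hεn ha hy hc]
  have htail : 0 ≤ tail ∧ N * N * tail ≤ L := by
    refine ⟨Finset.sum_nonneg fun r _ => mul_nonneg (by positivity) (circleBump_nonneg _), ?_⟩
    have hle : tail ≤ (ℓ : ℝ) ^ (m * n - 2 * n) :=
      (Finset.sum_le_sum fun r _ => mul_le_of_le_one_right (by positivity)
        (circleBump_le_one _)).trans (sum_range_pow_le_pow (by exact_mod_cast hℓ) _)
    rcases Nat.lt_or_ge (m * n) (2 * n) with hsmall | hlarge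
    · simp [tail, Nat.sub_eq_zero_of_le hsmall.le]
      positivity
    · calc N * N * tail ≤ N * N * (ℓ : ℝ) ^ (m * n - 2 * n) := by gcongr
        _ = L := by rw [← pow_add, ← pow_add]; congr 1; omega
  have hmean : 0 ≤ mean ∧ mean ≤ 4 * ε * L :=
    ⟨mul_nonneg bumpMass_nonneg (Finset.sum_nonneg fun r _ => by positivity),
      mul_le_mul (bumpMass_le hε hε4) (sum_range_pow_le_pow (by exact_mod_cast hℓ) _)
        (Finset.sum_nonneg fun r _ => by positivity) (by positivity)⟩
  have hL : 0 < L := by positivity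
  have heq : L⁻¹ * circDeriv (birkC ℓ (circlePrimitive (3 * N) ε c) (m * n)) z - 3 * b =
      3 * (N * tail / L) - 3 * N * (mean / L) := by
    rw [hderiv, hsplit, hFr₀, ← hNL]
    field_simp
    ring
  have htail' : N * tail / L ≤ N⁻¹ := by
    rw [div_le_iff₀ hL, ← div_eq_inv_mul, le_div_iff₀ hN]
    linarith [htail.2]
  have hmean' : mean / L ≤ 4 * ε := by rw [div_le_iff₀ hL]; exact hmean.2
  rw [heq, abs_le]
  constructor
  · nlinarith [div_nonneg (mul_nonneg hN.le htail.1) hL.le]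
  · nlinarith [div_nonneg hmean.1 hL.le]

end

lemma exists_apply_lt_of_ne_one {q : ℕ} {σ : Equiv.Perm (Fin q)} (hσ : σ ≠ 1) :
    ∃ j, σ j < j := by
  by_contra! hle
  refine hσ (Equiv.ext fun j => Fin.ext ?_)
  have hsum : ∑ j : Fin q, (j : ℕ) = ∑ j, (σ j : ℕ) :=
    (Equiv.sum_comp σ (fun j => (j : ℕ))).symm
  exact ((Finset.sum_eq_sum_iff_of_le (f := fun j : Fin q => (j : ℕ)) fun j _ => hle j).1 hsum j
    (Finset.mem_univ j)).symm

lemma pow_sub_le_det_of_abs_le {q : ℕ} (M : Matrix (Fin q) (Fin q) ℝ) {a B η : ℝ} (ha : 0 ≤ a)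
    (hη : 0 ≤ η) (hdiag : ∀ j, a ≤ M j j) (hall : ∀ j j', |M j j'| ≤ B)
    (hup : ∀ j j', j < j' → |M j j'| ≤ η) :
    a ^ q - ((q.factorial : ℝ) - 1) * (η * B ^ (q - 1)) ≤ M.det := by
  rw [Matrix.det_apply, ← Finset.add_sum_erase _ _ (Finset.mem_univ (1 : Equiv.Perm (Fin q)))]
  have hdiagprod :
      a ^ q ≤ Equiv.Perm.sign (1 : Equiv.Perm (Fin q)) • ∏ i, M ((1 : Equiv.Perm (Fin q)) i) i := by
    simpa using Finset.prod_le_prod (s := Finset.univ) (fun _ _ => ha) fun i _ => hdiag i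
  have hterm : ∀ σ ∈ Finset.univ.erase (1 : Equiv.Perm (Fin q)),
      |Equiv.Perm.sign σ • ∏ i, M (σ i) i| ≤ η * B ^ (q - 1) := by
    intro σ hσ
    obtain ⟨j, hj⟩ := exists_apply_lt_of_ne_one (Finset.ne_of_mem_erase hσ)
    have habs : |Equiv.Perm.sign σ • ∏ i, M (σ i) i| = ∏ i, |M (σ i) i| := by
      rcases Int.units_eq_one_or (Equiv.Perm.sign σ) with hs | hs <;>
        simp [hs, Finset.abs_prod]
    have hrest : ∏ i ∈ Finset.univ.erase j, |M (σ i) i| ≤ B ^ (q - 1) := by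
      calc ∏ i ∈ Finset.univ.erase j, |M (σ i) i| ≤ ∏ _i ∈ Finset.univ.erase j, B :=
            Finset.prod_le_prod (fun _ _ => abs_nonneg _) fun i _ => hall _ _
        _ = B ^ (q - 1) := by simp [Finset.card_erase_of_mem]
    rw [habs, ← Finset.mul_prod_erase _ _ (Finset.mem_univ j)]
    exact mul_le_mul (hup _ _ hj) hrest (Finset.prod_nonneg fun _ _ => abs_nonneg _) hη
  have hsum := (Finset.abs_sum_le_sum_abs _ _).trans (Finset.sum_le_sum hterm)
  rw [Finset.sum_const, Finset.card_erase_of_mem (Finset.mem_univ _), Finset.card_univ,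
    Fintype.card_perm, Fintype.card_fin, nsmul_eq_mul, Nat.cast_sub q.factorial_pos,
    Nat.cast_one] at hsum
  linarith [neg_abs_le (∑ σ ∈ Finset.univ.erase (1 : Equiv.Perm (Fin q)),
    Equiv.Perm.sign σ • ∏ i, M (σ i) i)]

-- With entries bounded by `3p + 1`, each of the `q! - 1` non-identity terms of the determinant
-- expansion is at most `detTolerance p q * (3p + 1)^(q - 1) = 1 / q!`.
def detTolerance (p q : ℕ) : ℝ := ((q.factorial : ℝ) * (3 * p + 1) ^ (q - 1))⁻¹

lemma detTolerance_pos (p q : ℕ) : 0 < detTolerance p q := by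
  unfold detTolerance
  positivity

lemma detTolerance_le_one (p q : ℕ) : detTolerance p q ≤ 1 :=
  inv_le_one_of_one_le₀ (one_le_mul_of_one_le_of_one_le (by exact_mod_cast q.factorial_pos)
    (one_le_pow₀ (le_add_of_nonneg_left (by positivity))))

lemma one_le_det_of_abs_sub_incidence_le {α : Type*} [DecidableEq α] {p q : ℕ}
    (a : Fin q → Fin p → α) (y : Fin q → α) (hdiag : ∀ j, ∃ i, a j i = y j)
    (hup : ∀ j j', j < j' → ∀ i, a j i ≠ y j') (M : Matrix (Fin q) (Fin q) ℝ)
    (hM : ∀ j j', |M j j' - 3 * ∑ i, (if a j i = y j' then 1 else 0 : ℝ)| ≤ detTolerance p q) :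
    1 ≤ M.det := by
  set η := detTolerance p q
  set T : Fin q → Fin q → ℝ := fun j j' => ∑ i, if a j i = y j' then 1 else 0
  have hη0 := detTolerance_pos p q
  have hη1 := detTolerance_le_one p q
  have hT0 : ∀ j j', 0 ≤ T j j' := fun j j' =>
    Finset.sum_nonneg fun i _ => by split_ifs <;> norm_num
  have hTp : ∀ j j', T j j' ≤ p := fun j j' => by
    calc T j j' ≤ ∑ _i : Fin p, (1 : ℝ) := Finset.sum_le_sum fun i _ => by split_ifs <;> norm_num
      _ = p := by simp
  have hTd : ∀ j, 1 ≤ T j j := fun j => by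
    obtain ⟨i, hi⟩ := hdiag j
    calc (1 : ℝ) = if a j i = y j then 1 else 0 := by rw [if_pos hi]
      _ ≤ T j j := Finset.single_le_sum (f := fun i => if a j i = y j then (1 : ℝ) else 0)
          (fun i _ => by split_ifs <;> norm_num) (Finset.mem_univ i)
  have hTup : ∀ j j', j < j' → T j j' = 0 := fun j j' h =>
    Finset.sum_eq_zero fun i _ => if_neg (hup j j' h i)
  have hMd : ∀ j, 2 ≤ M j j := fun j => by linarith [(abs_le.1 (hM j j)).1, hTd j]
  have hMall : ∀ j j', |M j j'| ≤ 3 * p + 1 := fun j j' => by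
    rw [abs_le]
    constructor <;> linarith [abs_le.1 (hM j j'), hT0 j j', hTp j j']
  have hMup : ∀ j j', j < j' → |M j j'| ≤ η := fun j j' h => by
    simpa [T, hTup j j' h] using hM j j'
  have hdet := pow_sub_le_det_of_abs_le M zero_le_two hη0.le hMd hMall hMup
  have hcancel : ((q.factorial : ℝ) - 1) * (η * (3 * p + 1) ^ (q - 1)) =
      1 - (q.factorial : ℝ)⁻¹ := by
    simp only [η, detTolerance]
    field_simp
  have h2q : 2 - (q.factorial : ℝ)⁻¹ ≤ 2 ^ q := by
    rcases q with _ | q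
    · norm_num
    · linarith [le_self_pow₀ (one_le_two : (1 : ℝ) ≤ 2) (by omega : q + 1 ≠ 0),
        inv_nonneg.2 (Nat.cast_nonneg (α := ℝ) (q + 1).factorial)]
  linarith

lemma exists_dist_coe_div_le {K : ℕ} (hK : 0 < K) (y : S1) :
    ∃ k : Fin K, dist y (((k : ℕ) / K : ℝ) : S1) ≤ (K : ℝ)⁻¹ := by
  set u : ℝ := (AddCircle.equivIco 1 0 y : ℝ)
  have hu : u ∈ Set.Ico (0 : ℝ) 1 := by simpa using (AddCircle.equivIco 1 0 y).2
  have hK' : (0 : ℝ) < K := by exact_mod_cast hK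
  have huK : 0 ≤ u * K := by nlinarith [hu.1]
  have hlt : ⌊u * K⌋₊ < K := by
    rw [Nat.floor_lt huK]
    nlinarith [hu.2]
  refine ⟨⟨⌊u * K⌋₊, hlt⟩, ?_⟩
  have hy : ((u : ℝ) : S1) = y := (AddCircle.equivIco 1 0).symm_apply_apply y
  have hfloor : u - (⌊u * K⌋₊ : ℝ) / K = (u * K - ⌊u * K⌋₊) * (K : ℝ)⁻¹ := by field_simp
  have hle : (⌊u * K⌋₊ : ℝ) ≤ u * K := Nat.floor_le huK
  rw [← hy]
  refine (dist_coe_le _ _).trans ?_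
  rw [Fin.val_mk, hfloor, abs_of_nonneg (by have := inv_pos.2 hK'; nlinarith)]
  calc (u * K - ⌊u * K⌋₊) * (K : ℝ)⁻¹ ≤ 1 * (K : ℝ)⁻¹ := by
        gcongr
        linarith [Nat.lt_floor_add_one (u * K)]
    _ = (K : ℝ)⁻¹ := one_mul _

lemma exists_forall_ge_le_pow {ℓ : ℝ} (hℓ : 1 < ℓ) (C : ℝ) :
    ∃ n₀ : ℕ, 1 ≤ n₀ ∧ ∀ n ≥ n₀, C ≤ ℓ ^ n := by
  obtain ⟨n₁, hn₁⟩ := pow_unbounded_of_one_lt C hℓ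
  exact ⟨max 1 n₁, le_max_left _ _, fun n hn =>
    hn₁.le.trans (pow_le_pow_right₀ hℓ.le (le_of_max_le_right hn))⟩

lemma exists_bump_width (p : ℕ) {N δ η : ℝ} (hN : 1 ≤ N) (hη : 0 < η) (hη1 : η ≤ 1)
    (hpN : 6 * p / η ≤ N) (hδ : 0 < δ) :
    ∃ ε : ℝ, 0 < ε ∧ ε ≤ 1 / 4 ∧ 6 * N * ε ≤ δ ∧ 3 * ε < N⁻¹ ∧
      p * (3 * N⁻¹ + 12 * N * ε) ≤ η := by
  set w := min δ (η / (4 * (p + 1)))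
  have hp : (0 : ℝ) < p + 1 := by positivity
  have hw : 0 < w := lt_min hδ (by positivity)
  have hwη : w * (4 * (p + 1)) ≤ η := (le_div_iff₀ (by positivity)).1 (min_le_right _ _)
  have hw4 : w ≤ 1 / 4 := by nlinarith [p.cast_nonneg (α := ℝ)]
  have hN0 : 0 < N := by linarith
  refine ⟨w / (6 * N), by positivity, ?_, ?_, ?_, ?_⟩
  · exact (div_le_self hw.le (by linarith)).trans hw4
  · rw [mul_div_cancel₀ _ (by positivity)]
    exact min_le_left _ _
  · rw [show 3 * (w / (6 * N)) = w / 2 * N⁻¹ by field_simp; ring]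
    exact mul_lt_of_lt_one_left (inv_pos.2 hN0) (by linarith)
  · have h3p : 3 * p / N ≤ η / 2 := by
      rw [div_le_iff₀ hN0]
      linarith [(div_le_iff₀' hη).1 hpN]
    rw [show (p : ℝ) * (3 * N⁻¹ + 12 * N * (w / (6 * N))) = 3 * p / N + 2 * p * w by
      field_simp; ring]
    nlinarith

end AngleMultiplying

open AngleMultiplying in
theorem stmt8_general (ℓ p q : ℕ) (hℓ : 2 ≤ ℓ) :
    ∃ n₀ : ℕ, 1 ≤ n₀ ∧ ∀ δ : ℝ, 0 < δ → ∀ n : ℕ, n₀ ≤ n →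
      ∃ K : ℕ, 1 ≤ K ∧ ∃ g : Fin K → S1 → ℝ,
        (∀ k, ContDiff ℝ (⊤ : ℕ∞) fun t : ℝ => g k (t : S1)) ∧
        ∀ x : S1, x ∉ PerNbhd ℓ n δ → ∀ m : ℕ, 1 ≤ m →
          ∀ xt : Fin q → Fin p → S1,
            (∀ j i, (tauC ℓ)^[m * n] (xt j i) = x) →
            (∀ j : Fin q, ∃ i : Fin p, ∀ j' : Fin q, j' < j → ∀ i' : Fin p,
              (tauC ℓ)^[(m - 1) * n] (xt j' i') ≠ (tauC ℓ)^[(m - 1) * n] (xt j i)) →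
            ∃ ks : Fin q → Fin K,
              1 ≤ Matrix.det (Matrix.of fun j j' : Fin q =>
                ((ℓ : ℝ) ^ (m * n))⁻¹ *
                  ∑ i, circDeriv (birkC ℓ (g (ks j')) (m * n)) (xt j i)) := by
  have hℓ1 : (1 : ℝ) < ℓ := by exact_mod_cast hℓ
  obtain ⟨n₀, hn₀, hpow⟩ := exists_forall_ge_le_pow hℓ1 (6 * p / detTolerance p q)
  refine ⟨n₀, hn₀, fun δ hδ n hn => ?_⟩
  obtain ⟨ε, hε, hε4, hεδ, hεn, hεη⟩ := exists_bump_width p (one_le_pow₀ hℓ1.le)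
    (detTolerance_pos p q) (detTolerance_le_one p q) (hpow n hn) hδ
  obtain ⟨K, hK⟩ := exists_nat_one_div_lt hε
  refine ⟨K + 1, by omega, fun k => circlePrimitive (3 * (ℓ : ℝ) ^ n) ε ((k : ℕ) / (K + 1 : ℕ)),
    fun k => bumpPrimitive_contDiff, fun x hx m hm xt hxt hind => ?_⟩
  choose ii hii using hind
  have hy : ∀ j, (tauC ℓ)^[n] ((tauC ℓ)^[(m - 1) * n] (xt j (ii j))) = x := fun j => by
    rw [← iterate_add_apply, add_comm, sub_one_mul_add_self hm, hxt]
  choose ks hks using fun j =>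
    exists_dist_coe_div_le K.succ_pos ((tauC ℓ)^[(m - 1) * n] (xt j (ii j)))
  refine ⟨ks, one_le_det_of_abs_sub_incidence_le (fun j i => (tauC ℓ)^[(m - 1) * n] (xt j i))
    _ (fun j => ⟨ii j, rfl⟩) (fun j j' h i => hii j' j h i) _ fun j j' => ?_⟩
  rw [Matrix.of_apply, Finset.mul_sum, Finset.mul_sum, ← Finset.sum_sub_distrib]
  refine (Finset.abs_sum_le_sum_abs _ _).trans ((Finset.sum_le_sum fun i _ =>
    abs_circDeriv_birkC_sub_le hℓ (by omega) hm hε hε4 hεδ hεn hx (hy j')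
      ((hks j').trans ?_) (hxt j i)).trans ?_)
  · push_cast
    rw [← one_div]
    exact hK.le
  · rw [Finset.sum_const, Finset.card_univ, Fintype.card_fin, nsmul_eq_mul]
    exact hεη

/-- Lemma `lm:family` of the paper: existence of a finite family of smooth
functions `g₁,…,g_K` on the circle such that, along any independent array of preimages, the
matrix of partial derivatives `∂Ŝ(𝐱̃_j, mn; f_𝐬)/∂s_{k(j′)} = ℓ^{-mn} ∑_i (g_{k(j')}^{(mn)})′(𝐱̃_j(i))`
has determinant `≥ 1` for a suitable choice of indices `k(1),…,k(q)`. -/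
theorem stmt8 (ℓ p q : ℕ) (hℓ : 2 ≤ ℓ) (hp : 1 ≤ p) (hq : 1 ≤ q) :
    ∃ n₀ : ℕ, 1 ≤ n₀ ∧ ∀ δ : ℝ, 0 < δ → ∀ n : ℕ, n₀ ≤ n →
      ∃ K : ℕ, 1 ≤ K ∧ ∃ g : Fin K → S1 → ℝ,
        (∀ k, ContDiff ℝ (⊤ : ℕ∞) fun t : ℝ => g k (t : S1)) ∧
        ∀ x : S1, x ∉ PerNbhd ℓ n δ → ∀ m : ℕ, 1 ≤ m →
          ∀ xt : Fin q → Fin p → S1,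
            (∀ j i, (tauC ℓ)^[m * n] (xt j i) = x) →
            (∀ j : Fin q, ∃ i : Fin p, ∀ j' : Fin q, j' < j → ∀ i' : Fin p,
              (tauC ℓ)^[(m - 1) * n] (xt j' i') ≠ (tauC ℓ)^[(m - 1) * n] (xt j i)) →
            ∃ ks : Fin q → Fin K,
              1 ≤ Matrix.det (Matrix.of fun j j' : Fin q =>
                ((ℓ : ℝ) ^ (m * n))⁻¹ *
                  ∑ i, circDeriv (birkC ℓ (g (ks j')) (m * n)) (xt j i)) :=
  stmt8_general ℓ p q hℓ
end
end

section
/- Let 0 < y_min < y_max and let f : S¹ → ℝ be continuous with y_min < f(x) < y_max for every x ∈ S¹. Then for every z ∈ X_f and every real t > y_max, the set (T_f^t)^{−1}(z) = {w ∈ X_f : T_f^t(w) = z} is finite and ℓ^{(t−y_max)/y_max} ≤ #(T_f^t)^{−1}(z) ≤ ℓ^{⌈(t+y_max)/y_min⌉}, where ℓ^{(t−y_max)/y_max} denotes the real power. -/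
noncomputable section
open MeasureTheory

/-!
Let `N = ⌈(t + y_max) / y_min⌉`. For each of the `ℓ ^ N` points `x ∈ τ^{-N}(z.1)` the orbit of
`(x, 0)` reaches `z` at time `f^{(N)}(x) + z.2 ≥ t`, so by the semigroup property of `T_f` its
point `t` time units earlier is a preimage of `z` under `T_f^t`. Every preimage `w` arises in this
way, from exactly the `ℓ ^ (N - n(w))` points `x` with `τ^{N - n(w)}(x) = w.1`, where `n(w)` is
the number of returns of the orbit of `w` to the base up to time `t`. Since
`(t - y_max) / y_max ≤ n(w) ≤ N`, counting the points `x` by their images gives both bounds.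
-/

open Function

section Birkhoff

variable {ℓ : ℕ} {f : S1 → ℝ}

lemma birkC_zero (x : S1) : birkC ℓ f 0 x = 0 := by
  simp [birkC]

lemma birkC_succ (n : ℕ) (x : S1) :
    birkC ℓ f (n + 1) x = birkC ℓ f n x + f ((tauC ℓ)^[n] x) :=
  Finset.sum_range_succ _ _

lemma birkC_add (m n : ℕ) (x : S1) :
    birkC ℓ f (m + n) x = birkC ℓ f m x + birkC ℓ f n ((tauC ℓ)^[m] x) := by
  rw [birkC, Finset.sum_range_add]
  exact congrArg _ (Finset.sum_congr rfl fun i _ => by rw [add_comm, iterate_add_apply])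

lemma mul_le_birkC (ℓ : ℕ) {a : ℝ} (hfa : ∀ x, a ≤ f x) (n : ℕ) (x : S1) :
    n * a ≤ birkC ℓ f n x := by
  simpa [birkC] using Finset.card_nsmul_le_sum (Finset.range n) _ a fun i _ => hfa _

lemma birkC_le_mul (ℓ : ℕ) {b : ℝ} (hfb : ∀ x, f x ≤ b) (n : ℕ) (x : S1) :
    birkC ℓ f n x ≤ n * b := by
  simpa [birkC] using Finset.sum_le_card_nsmul (Finset.range n) _ b fun i _ => hfb _

lemma birkC_strictMono (hf : ∀ x, 0 < f x) (x : S1) : StrictMono (birkC ℓ f · x) :=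
  strictMono_nat_of_lt_succ fun n => by
    rw [birkC_succ]
    linarith [hf ((tauC ℓ)^[n] x)]

end Birkhoff

section ReturnCount

variable {ℓ : ℕ} {f : S1 → ℝ}

lemma nOf_eq_of_birkC_le_of_lt (hf : ∀ x, 0 < f x) {x : S1} {s : ℝ} {n : ℕ}
    (hle : birkC ℓ f n x ≤ s) (hlt : s < birkC ℓ f (n + 1) x) : nOf ℓ f x s = n := by
  have hmono := birkC_strictMono (ℓ := ℓ) hf x
  have hset : {m | birkC ℓ f m x ≤ s} = Set.Iic n := by
    ext m
    refine ⟨fun hm => Nat.lt_succ_iff.mp ?_, fun hm => (hmono.monotone hm).trans hle⟩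
    exact hmono.lt_iff_lt.mp (hm.trans_lt hlt)
  rw [nOf, hset, csSup_Iic]

lemma birkC_nOf_le_and_lt (ℓ : ℕ) {a : ℝ} (ha : 0 < a) (hfa : ∀ x, a ≤ f x) (x : S1) {s : ℝ}
    (hs : 0 ≤ s) : birkC ℓ f (nOf ℓ f x s) x ≤ s ∧ s < birkC ℓ f (nOf ℓ f x s + 1) x := by
  have hbdd : BddAbove {m | birkC ℓ f m x ≤ s} := by
    refine ⟨⌈s / a⌉₊, fun m hm => ?_⟩
    have : (m : ℝ) ≤ s / a := (le_div_iff₀ ha).mpr ((mul_le_birkC ℓ hfa m x).trans hm)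
    exact_mod_cast this.trans (Nat.le_ceil _)
  refine ⟨Nat.sSup_mem ⟨0, by simpa [birkC_zero] using hs⟩ hbdd, not_le.mp fun h => ?_⟩
  exact (Nat.lt_succ_self _).not_ge (le_csSup hbdd h)

lemma nOf_iterate_add_of_birkC_le {a : ℝ} (ha : 0 < a) (hfa : ∀ x, a ≤ f x) {x : S1} {u : ℝ} {j : ℕ}
    (hj : birkC ℓ f j x ≤ u) :
    nOf ℓ f ((tauC ℓ)^[j] x) (u - birkC ℓ f j x) + j = nOf ℓ f x u := by
  have hf : ∀ x, 0 < f x := fun x => ha.trans_le (hfa x)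
  have hu : 0 ≤ u := (mul_nonneg j.cast_nonneg ha.le).trans ((mul_le_birkC ℓ hfa j x).trans hj)
  obtain ⟨hle, hlt⟩ := birkC_nOf_le_and_lt ℓ ha hfa x hu
  have hjn : j ≤ nOf ℓ f x u :=
    Nat.lt_succ_iff.mp ((birkC_strictMono hf x).lt_iff_lt.mp (hj.trans_lt hlt))
  obtain ⟨k, hk⟩ := Nat.exists_eq_add_of_le hjn
  rw [hk] at hle hlt ⊢
  rw [birkC_add] at hle
  rw [add_assoc, birkC_add] at hlt
  rw [nOf_eq_of_birkC_le_of_lt hf (by linarith) (by linarith), add_comm]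

end ReturnCount

section Semiflow

variable {ℓ : ℕ} {f : S1 → ℝ}

lemma Tf_mem_Xf {a : ℝ} (ha : 0 < a) (hfa : ∀ x, a ≤ f x) {s : ℝ} {w : S1 × ℝ}
    (hs : 0 ≤ w.2 + s) : Tf ℓ f s w ∈ Xf ℓ f := by
  obtain ⟨hle, hlt⟩ := birkC_nOf_le_and_lt ℓ ha hfa w.1 hs
  rw [birkC_succ] at hlt
  exact ⟨sub_nonneg.mpr hle, by simp only [Tf]; linarith⟩

lemma nOf_Tf_add {a : ℝ} (ha : 0 < a) (hfa : ∀ x, a ≤ f x) {s t : ℝ} {w : S1 × ℝ}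
    (hs : 0 ≤ w.2 + s) (ht : 0 ≤ t) :
    nOf ℓ f (Tf ℓ f s w).1 ((Tf ℓ f s w).2 + t) + nOf ℓ f w.1 (w.2 + s) =
      nOf ℓ f w.1 (w.2 + (s + t)) := by
  have hle := (birkC_nOf_le_and_lt ℓ ha hfa w.1 hs).1
  rw [← nOf_iterate_add_of_birkC_le ha hfa (u := w.2 + (s + t)) (by linarith)]
  simp only [Tf]
  ring_nf

lemma Tf_Tf {a : ℝ} (ha : 0 < a) (hfa : ∀ x, a ≤ f x) {s t : ℝ} {w : S1 × ℝ}
    (hs : 0 ≤ w.2 + s) (ht : 0 ≤ t) : Tf ℓ f t (Tf ℓ f s w) = Tf ℓ f (s + t) w := by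
  have hn := nOf_Tf_add (ℓ := ℓ) ha hfa hs ht
  set j := nOf ℓ f w.1 (w.2 + s)
  set k := nOf ℓ f (Tf ℓ f s w).1 ((Tf ℓ f s w).2 + t)
  conv_rhs => rw [Tf, ← hn]
  refine Prod.ext (iterate_add_apply _ _ _ _).symm ?_
  have hsplit := birkC_add (ℓ := ℓ) (f := f) j k w.1
  rw [Nat.add_comm j k] at hsplit
  change w.2 + s - birkC ℓ f j w.1 + t - birkC ℓ f k ((tauC ℓ)^[j] w.1) =
    w.2 + (s + t) - birkC ℓ f (k + j) w.1
  linarith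

lemma Tf_birkC_add (hf : ∀ x, 0 < f x) {n : ℕ} {x : S1} {y : ℝ} (hy : 0 ≤ y)
    (hyf : y < f ((tauC ℓ)^[n] x)) :
    Tf ℓ f (birkC ℓ f n x + y) (x, 0) = ((tauC ℓ)^[n] x, y) := by
  have hn : nOf ℓ f x (0 + (birkC ℓ f n x + y)) = n :=
    nOf_eq_of_birkC_le_of_lt hf (by linarith) (by rw [birkC_succ]; linarith)
  simp only [Tf, hn]
  ring_nf

end Semiflow

namespace AddCircle

variable {𝕜 : Type*} [Field 𝕜] [LinearOrder 𝕜] [IsStrictOrderedRing 𝕜] {p : 𝕜} [Fact (0 < p)]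

lemma ker_nsmulAddMonoidHom {k : ℕ} (hk : 0 < k) :
    (nsmulAddMonoidHom k : AddCircle p →+ AddCircle p).ker =
      AddSubgroup.zmultiples ((p / k : 𝕜) : AddCircle p) := by
  ext u
  rw [AddMonoidHom.mem_ker, nsmulAddMonoidHom_apply, AddSubgroup.mem_zmultiples_iff]
  constructor
  · rintro hu
    obtain ⟨m, -, rfl⟩ := (AddCircle.nsmul_eq_zero_iff hk).mp hu
    exact ⟨m, by rw [natCast_div_mul_eq_nsmul, natCast_zsmul]⟩
  · rintro ⟨m, rfl⟩
    have : k • ((p / k : 𝕜) : AddCircle p) = 0 := by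
      simpa only [addOrderOf_period_div hk] using
        addOrderOf_nsmul_eq_zero ((p / k : 𝕜) : AddCircle p)
    rw [smul_comm, this, smul_zero]

lemma card_ker_nsmulAddMonoidHom {k : ℕ} (hk : 0 < k) :
    Nat.card (nsmulAddMonoidHom k : AddCircle p →+ AddCircle p).ker = k := by
  rw [ker_nsmulAddMonoidHom hk, Nat.card_zmultiples, addOrderOf_period_div hk]

variable [FloorRing 𝕜]

lemma card_nsmul_eq {k : ℕ} (hk : 0 < k) (c : AddCircle p) :
    Nat.card {x : AddCircle p // k • x = c} = k := by
  have hsurj : Function.Surjective (nsmulAddMonoidHom k : AddCircle p →+ AddCircle p) := by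
    simpa [nsmulAddMonoidHom] using DivisibleBy.surjective_smul (AddCircle p) ℤ (n := k) (by omega)
  exact (Nat.card_congr (AddMonoidHom.fiberEquivKerOfSurjective hsurj c)).trans
    (card_ker_nsmulAddMonoidHom hk)

end AddCircle

lemma card_le_card_mul_of_card_fiber_le {α β : Type*} [Finite α] [Finite β] (g : α → β)
    {K : ℕ} (hg : ∀ b, Nat.card {a // g a = b} ≤ K) : Nat.card α ≤ Nat.card β * K := by
  have := Fintype.ofFinite β
  rw [← Nat.card_congr (Equiv.sigmaFiberEquiv g), Nat.card_sigma, Nat.card_eq_fintype_card]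
  simpa using Finset.sum_le_card_nsmul Finset.univ _ K fun b _ => hg b

lemma pow_le_card_and_card_le_pow_of_card_fiber {α β : Type*} {ℓ N n₁ : ℕ} (hℓ : 0 < ℓ)
    (hn₁ : n₁ ≤ N) (g : α → β) (hα : Nat.card α = ℓ ^ N) (n : β → ℕ) (hn : ∀ b, n₁ ≤ n b)
    (hg : ∀ b, Nat.card {a // g a = b} = ℓ ^ (N - n b)) :
    Finite β ∧ ℓ ^ n₁ ≤ Nat.card β ∧ Nat.card β ≤ ℓ ^ N := by
  have : Finite α := Nat.finite_of_card_ne_zero (hα ▸ (pow_pos hℓ N).ne')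
  have hsurj : Function.Surjective g := fun b => by
    obtain ⟨⟨a, ha⟩⟩ := (Nat.card_pos_iff.mp (hg b ▸ pow_pos hℓ _)).1
    exact ⟨a, ha⟩
  have : Finite β := Finite.of_surjective g hsurj
  refine ⟨this, Nat.le_of_mul_le_mul_right ?_ (pow_pos hℓ (N - n₁)),
    hα ▸ Nat.card_le_card_of_surjective g hsurj⟩
  rw [← pow_add, Nat.add_sub_cancel' hn₁, ← hα]
  exact card_le_card_mul_of_card_fiber_le g fun b =>
    (hg b).trans_le (Nat.pow_le_pow_right hℓ (Nat.sub_le_sub_left (hn b) N))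

lemma iterate_tauC (ℓ m : ℕ) (x : S1) : (tauC ℓ)^[m] x = ℓ ^ m • x := by
  induction m generalizing x with
  | zero => simp
  | succ m ih => rw [iterate_succ_apply, ih, tauC, pow_succ, mul_smul]

lemma card_iterate_tauC_eq {ℓ : ℕ} (hℓ : 0 < ℓ) (m : ℕ) (c : S1) :
    Nat.card {x : S1 // (tauC ℓ)^[m] x = c} = ℓ ^ m := by
  simpa only [iterate_tauC] using AddCircle.card_nsmul_eq (pow_pos hℓ m) c

section BackwardOrbit

variable {ℓ : ℕ} {f : S1 → ℝ} {z : S1 × ℝ} {t : ℝ} {N : ℕ}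

/-- For `x ∈ τ^{-N}(z.1)`, the point `t` time units before `z` on the orbit of `(x, 0)`. -/
def branchPoint (ℓ : ℕ) (f : S1 → ℝ) (N : ℕ) (z : S1 × ℝ) (t : ℝ) (x : S1) : S1 × ℝ :=
  Tf ℓ f (birkC ℓ f N x + z.2 - t) (x, 0)

lemma branchPoint_mem {a : ℝ} (ha : 0 < a) (hfa : ∀ x, a ≤ f x) (hz : z ∈ Xf ℓ f) (ht : 0 ≤ t)
    {x : S1} (hx : (tauC ℓ)^[N] x = z.1) (hs : t ≤ birkC ℓ f N x + z.2) :
    branchPoint ℓ f N z t x ∈ Xf ℓ f ∧ Tf ℓ f t (branchPoint ℓ f N z t x) = z := by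
  have hf : ∀ x, 0 < f x := fun x => ha.trans_le (hfa x)
  have hs' : 0 ≤ (x, (0 : ℝ)).2 + (birkC ℓ f N x + z.2 - t) := by simpa using hs
  refine ⟨Tf_mem_Xf ha hfa hs', ?_⟩
  rw [branchPoint, Tf_Tf ha hfa hs' ht, sub_add_cancel, Tf_birkC_add hf hz.1 (hx ▸ hz.2), hx]

lemma branchPoint_eq_iff {a : ℝ} (ha : 0 < a) (hfa : ∀ x, a ≤ f x) (hz : z ∈ Xf ℓ f)
    (ht : 0 ≤ t) {x : S1} (hx : (tauC ℓ)^[N] x = z.1) (hs : t ≤ birkC ℓ f N x + z.2)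
    {w : S1 × ℝ} (hw : w ∈ Xf ℓ f) (hTw : Tf ℓ f t w = z) (hwN : nOf ℓ f w.1 (w.2 + t) ≤ N) :
    branchPoint ℓ f N z t x = w ↔ (tauC ℓ)^[N - nOf ℓ f w.1 (w.2 + t)] x = w.1 := by
  have hf : ∀ x, 0 < f x := fun x => ha.trans_le (hfa x)
  constructor
  · rintro rfl
    have hs' : 0 ≤ (x, (0 : ℝ)).2 + (birkC ℓ f N x + z.2 - t) := by simpa using hs
    have hN : nOf ℓ f x (0 + (birkC ℓ f N x + z.2 - t + t)) = N :=
      nOf_eq_of_birkC_le_of_lt hf (by linarith [hz.1]) (by rw [birkC_succ, hx]; linarith [hz.2])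
    have hsum : nOf ℓ f (branchPoint ℓ f N z t x).1 ((branchPoint ℓ f N z t x).2 + t) +
        nOf ℓ f x (0 + (birkC ℓ f N x + z.2 - t)) = N :=
      (nOf_Tf_add ha hfa hs' ht).trans hN
    change (tauC ℓ)^[N - _] x = (tauC ℓ)^[nOf ℓ f x (0 + (birkC ℓ f N x + z.2 - t))] x
    congr 1
    omega
  · intro hxw
    have hzw : w.2 + t - birkC ℓ f (nOf ℓ f w.1 (w.2 + t)) w.1 = z.2 := congrArg Prod.snd hTw
    have hsplit := birkC_add (ℓ := ℓ) (f := f) (N - nOf ℓ f w.1 (w.2 + t)) (nOf ℓ f w.1 (w.2 + t)) x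
    rw [Nat.sub_add_cancel hwN, hxw] at hsplit
    have hs_eq : birkC ℓ f N x + z.2 - t = birkC ℓ f (N - nOf ℓ f w.1 (w.2 + t)) x + w.2 := by
      linarith
    rw [branchPoint, hs_eq, Tf_birkC_add hf hw.1 (by rw [hxw]; exact hw.2), hxw]

lemma card_branchPoint_fiber {a : ℝ} (ha : 0 < a) (hfa : ∀ x, a ≤ f x) (hℓ : 0 < ℓ)
    (hz : z ∈ Xf ℓ f) (ht : 0 ≤ t) (hN : t ≤ N * a) {w : S1 × ℝ} (hw : w ∈ Xf ℓ f)
    (hTw : Tf ℓ f t w = z) (hwN : nOf ℓ f w.1 (w.2 + t) ≤ N) :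
    Nat.card {x : {x : S1 // (tauC ℓ)^[N] x = z.1} // branchPoint ℓ f N z t x = w} =
      ℓ ^ (N - nOf ℓ f w.1 (w.2 + t)) := by
  have hs : ∀ x, t ≤ birkC ℓ f N x + z.2 := fun x => by linarith [mul_le_birkC ℓ hfa N x, hz.1]
  have hdesc : ∀ {x}, (tauC ℓ)^[N - nOf ℓ f w.1 (w.2 + t)] x = w.1 → (tauC ℓ)^[N] x = z.1 := by
    intro x hx
    rw [← Nat.add_sub_cancel' hwN, iterate_add_apply, hx]
    exact congrArg Prod.fst hTw
  rw [← card_iterate_tauC_eq hℓ _ w.1]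
  exact Nat.card_congr <| (Equiv.subtypeEquivRight fun x : {x : S1 // (tauC ℓ)^[N] x = z.1} =>
    branchPoint_eq_iff ha hfa hz ht x.2 (hs x) hw hTw hwN).trans
    (Equiv.subtypeSubtypeEquivSubtype hdesc)

lemma nOf_bounds_of_Tf_eq {ymin ymax : ℝ} (h0 : 0 < ymin)
    (hfb : ∀ x, ymin ≤ f x ∧ f x ≤ ymax) (hz : z ∈ Xf ℓ f) {w : S1 × ℝ} (hw : w ∈ Xf ℓ f)
    (hTw : Tf ℓ f t w = z) :
    ⌈(t - ymax) / ymax⌉₊ ≤ nOf ℓ f w.1 (w.2 + t) ∧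
      nOf ℓ f w.1 (w.2 + t) ≤ ⌈(t + ymax) / ymin⌉₊ := by
  have hzw : w.2 + t - birkC ℓ f (nOf ℓ f w.1 (w.2 + t)) w.1 = z.2 := congrArg Prod.snd hTw
  have hlo := mul_le_birkC ℓ (fun x => (hfb x).1) (nOf ℓ f w.1 (w.2 + t)) w.1
  have hhi := birkC_le_mul ℓ (fun x => (hfb x).2) (nOf ℓ f w.1 (w.2 + t)) w.1
  have hymax : 0 < ymax := h0.trans_le ((hfb z.1).1.trans (hfb z.1).2)
  constructor
  · rw [Nat.ceil_le, div_le_iff₀ hymax]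
    linarith [hw.1, hz.2, (hfb z.1).2]
  · have : (nOf ℓ f w.1 (w.2 + t) : ℝ) ≤ (t + ymax) / ymin :=
      (le_div_iff₀ h0).mpr (by linarith [hw.2, (hfb w.1).2, hz.1])
    exact_mod_cast this.trans (Nat.le_ceil _)

end BackwardOrbit

theorem stmt11_general (ℓ : ℕ) (hℓ : 2 ≤ ℓ) (ymin ymax : ℝ) (h0 : 0 < ymin) (h1 : ymin < ymax)
    (f : S1 → ℝ) (hfb : ∀ x, ymin < f x ∧ f x < ymax)
    (z : S1 × ℝ) (hz : z ∈ Xf ℓ f) (t : ℝ) (ht : ymax < t) :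
    {w : S1 × ℝ | w ∈ Xf ℓ f ∧ Tf ℓ f t w = z}.Finite ∧
      (ℓ : ℝ) ^ ((t - ymax) / ymax) ≤
        (Nat.card {w : S1 × ℝ // w ∈ Xf ℓ f ∧ Tf ℓ f t w = z} : ℝ) ∧
      Nat.card {w : S1 × ℝ // w ∈ Xf ℓ f ∧ Tf ℓ f t w = z} ≤
        ℓ ^ (Nat.ceil ((t + ymax) / ymin)) := by
  set N := ⌈(t + ymax) / ymin⌉₊
  set n₁ := ⌈(t - ymax) / ymax⌉₊
  have hℓ0 : 0 < ℓ := by omega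
  have hfa : ∀ x, ymin ≤ f x := fun x => (hfb x).1.le
  have hfb' : ∀ x, ymin ≤ f x ∧ f x ≤ ymax := fun x => ⟨(hfb x).1.le, (hfb x).2.le⟩
  have hN : t ≤ N * ymin := by
    have := (div_le_iff₀ h0).mp (Nat.le_ceil ((t + ymax) / ymin))
    linarith
  have hn₁ : n₁ ≤ N := Nat.ceil_le_ceil (div_le_div₀ (by linarith) (by linarith) h0 h1.le)
  have hlevel := fun w : {w : S1 × ℝ // w ∈ Xf ℓ f ∧ Tf ℓ f t w = z} =>
    nOf_bounds_of_Tf_eq h0 hfb' hz w.2.1 w.2.2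
  let Φ (x : {x : S1 // (tauC ℓ)^[N] x = z.1}) : {w : S1 × ℝ // w ∈ Xf ℓ f ∧ Tf ℓ f t w = z} :=
    ⟨branchPoint ℓ f N z t x.1, branchPoint_mem h0 hfa hz (by linarith) x.2
      (by linarith [mul_le_birkC ℓ hfa N x.1, hz.1])⟩
  obtain ⟨hfin, hlower, hupper⟩ := pow_le_card_and_card_le_pow_of_card_fiber hℓ0 hn₁ Φ
    (card_iterate_tauC_eq hℓ0 N z.1) (fun w => nOf ℓ f w.1.1 (w.1.2 + t)) (fun w => (hlevel w).1)
    fun w => (Nat.card_congr (Equiv.subtypeEquivRight fun x => Subtype.ext_iff)).trans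
      (card_branchPoint_fiber h0 hfa hℓ0 hz (by linarith) hN w.2.1 w.2.2 (hlevel w).2)
  refine ⟨Set.finite_coe_iff.mp hfin, ?_, hupper⟩
  calc (ℓ : ℝ) ^ ((t - ymax) / ymax) ≤ (ℓ : ℝ) ^ (n₁ : ℝ) :=
        Real.rpow_le_rpow_of_exponent_le (by exact_mod_cast hℓ0) (Nat.le_ceil _)
    _ ≤ _ := by rw [Real.rpow_natCast]; exact_mod_cast hlower

/-- cf. `(eq:card_backward_orbit)` of the paper: for `t > y_max` the backward
orbit `(T_f^t)^{-1}(z)` is finite, with cardinality between `ℓ^{(t-y_max)/y_max}` (a real power)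
and `ℓ^{⌈(t+y_max)/y_min⌉}`. -/
theorem stmt11 (ℓ : ℕ) (hℓ : 2 ≤ ℓ) (ymin ymax : ℝ) (h0 : 0 < ymin) (h1 : ymin < ymax)
    (f : S1 → ℝ) (hf : Continuous f) (hfb : ∀ x, ymin < f x ∧ f x < ymax)
    (z : S1 × ℝ) (hz : z ∈ Xf ℓ f) (t : ℝ) (ht : ymax < t) :
    {w : S1 × ℝ | w ∈ Xf ℓ f ∧ Tf ℓ f t w = z}.Finite ∧
      (ℓ : ℝ) ^ ((t - ymax) / ymax) ≤
        (Nat.card {w : S1 × ℝ // w ∈ Xf ℓ f ∧ Tf ℓ f t w = z} : ℝ) ∧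
      Nat.card {w : S1 × ℝ // w ∈ Xf ℓ f ∧ Tf ℓ f t w = z} ≤
        ℓ ^ (Nat.ceil ((t + ymax) / ymin)) :=
  stmt11_general ℓ hℓ ymin ymax h0 h1 f hfb z hz t ht
end
end

section
/- Let K ≥ q ≥ 1 be integers, r > 1 and σ > 0. There exists C > 0 (depending only on K, q, r, σ and χ) with the following property. Let Φ = (Φ₁,…,Φ_q) : ℝ^K → ℝ^q be an affine map and suppose there are distinct indices k(1), …, k(q) ∈ {1,…,K} such that the q×q matrix with entries ∂Φ_j/∂s_{k(j′)} has |determinant| ≥ 1. Then for every real λ ≥ 1 and every ξ = (ξ₁,…,ξ_q) ∈ ℝ^q: ∫_{[−σ,σ]^K} ∏_{j=1}^q ⟨λ·|ξ_j − Φ_j(s)|⟩^{−r} ds ≤ C·λ^{−q}. -/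
noncomputable section
open MeasureTheory

/-- The "Japanese bracket" `⟨s⟩ = χ(|s|) + (1 - χ(|s|))|s|` associated to the cutoff `χ`. -/
def jb (χ : ℝ → ℝ) (s : ℝ) : ℝ := χ |s| + (1 - χ |s|) * |s|

/-!
Since `⟨t⟩ ≥ (1 + t) / 3`, the integrand is dominated by `∏ⱼ g(ξⱼ - Φⱼ(s))` with
`g(t) = 3 ^ r (1 + |λ t|) ^ (-r)`, and `∫ g = 3 ^ r λ⁻¹ ∫ (1 + |t|) ^ (-r)` is finite as `r > 1`.
Enlarge the box to all of `ℝ` in the `q` coordinates `k(1), …, k(q)`. With the other coordinates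
fixed, `Φ(s) = a + M u` in these coordinates `u`, where `|det M| ≥ 1`, so the substitution
`w = M u` does not increase the integral, which then factorizes into `q` one-dimensional integrals,
each `O(λ⁻¹)`. The remaining `K - q` coordinates range over a box of volume `(2σ) ^ (K - q)`.
-/

open scoped ENNReal
open Set Function Matrix

theorem integral_le_of_enorm_le_of_lintegral_le {α : Type*} [MeasurableSpace α] {μ : Measure α}
    {f : α → ℝ} {F : α → ℝ≥0∞} {b : ℝ} (hb : 0 ≤ b) (hfF : ∀ x, ‖f x‖ₑ ≤ F x)
    (hF : ∫⁻ x, F x ∂μ ≤ ENNReal.ofReal b) : ∫ x, f x ∂μ ≤ b := by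
  have h : ENNReal.ofReal |∫ x, f x ∂μ| ≤ ENNReal.ofReal b :=
    calc ENNReal.ofReal |∫ x, f x ∂μ| = ‖∫ x, f x ∂μ‖ₑ := (Real.enorm_eq_ofReal_abs _).symm
      _ ≤ ∫⁻ x, ‖f x‖ₑ ∂μ := enorm_integral_le_lintegral_enorm _
      _ ≤ ∫⁻ x, F x ∂μ := lintegral_mono hfF
      _ ≤ ENNReal.ofReal b := hF
  exact (le_abs_self _).trans ((ENNReal.ofReal_le_ofReal_iff hb).mp h)

theorem integrable_one_add_abs_rpow_neg {r : ℝ} (hr : 1 < r) :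
    Integrable fun t : ℝ => (1 + |t|) ^ (-r) := by
  simpa [Real.norm_eq_abs] using integrable_one_add_norm (E := ℝ) (μ := volume) (r := r) (by simpa)

theorem integral_one_add_abs_rpow_neg_pos {r : ℝ} (hr : 1 < r) :
    0 < ∫ t : ℝ, (1 + |t|) ^ (-r) := by
  rw [integral_pos_iff_support_of_nonneg (fun t => by positivity)
    (integrable_one_add_abs_rpow_neg hr)]
  have : support (fun t : ℝ => (1 + |t|) ^ (-r)) = univ :=
    eq_univ_of_forall fun t => mem_support.mpr (by positivity)
  simp [this]

theorem integral_one_add_abs_mul_rpow_neg (r : ℝ) {lam : ℝ} (hlam : 0 < lam) :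
    ∫ t : ℝ, (1 + |lam * t|) ^ (-r) = lam⁻¹ * ∫ t : ℝ, (1 + |t|) ^ (-r) := by
  rw [Measure.integral_comp_mul_left (fun t => (1 + |t|) ^ (-r)) lam, smul_eq_mul,
    abs_of_pos (inv_pos.mpr hlam)]

theorem lintegral_pi_prod_ofReal {ι : Type*} [Fintype ι] {f : ι → ℝ → ℝ}
    (hf : ∀ i, Integrable (f i)) (hf0 : ∀ i t, 0 ≤ f i t) :
    ∫⁻ x : ι → ℝ, ∏ i, ENNReal.ofReal (f i (x i)) = ENNReal.ofReal (∏ i, ∫ t, f i t) := by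
  simp_rw [← ENNReal.ofReal_prod_of_nonneg fun i _ => hf0 i _]
  rw [← integral_fintype_prod_volume_eq_prod]
  exact (ofReal_integral_eq_lintegral_ofReal (Integrable.fintype_prod hf)
    (ae_of_all _ fun x => Finset.prod_nonneg fun i _ => hf0 i _)).symm

theorem lintegral_comp_mulVec_le {ι : Type*} [Fintype ι] [DecidableEq ι]
    (M : Matrix ι ι ℝ) (hdet : 1 ≤ |M.det|) {W : (ι → ℝ) → ℝ≥0∞} (hW : Measurable W) :
    ∫⁻ u, W (M *ᵥ u) ≤ ∫⁻ w, W w := by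
  have hdet0 : M.det ≠ 0 := fun h => by norm_num [h] at hdet
  have hM : Measurable (Matrix.toLin' M) := (LinearMap.continuous_on_pi _).measurable
  calc ∫⁻ u, W (M *ᵥ u) = ∫⁻ u, W (Matrix.toLin' M u) := rfl
    _ = ENNReal.ofReal |M.det⁻¹| * ∫⁻ w, W w := by
        rw [← lintegral_map hW hM, Real.map_matrix_volume_pi_eq_smul_volume_pi hdet0,
          lintegral_smul_measure, smul_eq_mul]
    _ ≤ 1 * ∫⁻ w, W w := by
        gcongr
        rw [ENNReal.ofReal_le_one, abs_inv]
        exact inv_le_one_of_one_le₀ hdet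
    _ = ∫⁻ w, W w := one_mul _

theorem lintegral_prod_sub_mulVec_le {ι : Type*} [Fintype ι] [DecidableEq ι]
    (M : Matrix ι ι ℝ) (hdet : 1 ≤ |M.det|) {g : ℝ → ℝ} (hg : Integrable g) (hgm : Measurable g)
    (hg0 : ∀ t, 0 ≤ g t) (a : ι → ℝ) :
    ∫⁻ u, ∏ i, ENNReal.ofReal (g (a i - (M *ᵥ u) i)) ≤
      ENNReal.ofReal ((∫ t, g t) ^ Fintype.card ι) := by
  have hW : Measurable fun w : ι → ℝ => ∏ i, ENNReal.ofReal (g (a i - w i)) := by fun_prop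
  calc ∫⁻ u, ∏ i, ENNReal.ofReal (g (a i - (M *ᵥ u) i))
      ≤ ∫⁻ w : ι → ℝ, ∏ i, ENNReal.ofReal (g (a i - w i)) := lintegral_comp_mulVec_le M hdet hW
    _ = ENNReal.ofReal ((∫ t, g t) ^ Fintype.card ι) := by
        rw [lintegral_pi_prod_ofReal (f := fun i t => g (a i - t)) (fun i => hg.comp_sub_left _)
          (fun i t => hg0 _)]
        simp_rw [integral_sub_left_eq_self g]
        rw [Finset.prod_const, Finset.card_univ]

theorem mulVec_add_extend {R m n p : Type*} [NonUnitalNonAssocSemiring R] [Fintype n] [Fintype p]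
    {e : p → n} (he : Injective e) (A : Matrix m n R) (s : n → R) (u : p → R) :
    A *ᵥ (s + extend e u 0) = A *ᵥ s + A.submatrix id e *ᵥ u := by
  rw [Matrix.mulVec_add]
  congr 1
  funext j
  refine (Fintype.sum_of_injective e he _ _ (fun k hk => ?_) fun j' => ?_).symm
  · rw [extend_apply' _ _ _ fun ⟨j', h⟩ => hk ⟨j', h⟩, Pi.zero_apply, mul_zero]
  · rw [he.extend_apply]; rfl

section SplitCoordinates

open scoped Classical

variable {ι κ : Type*} {e : κ → ι}

def complSumEquiv (he : Injective e) : (((range e)ᶜ : Set ι) ⊕ κ) ≃ ι :=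
  (Equiv.sumComm _ _).trans
    (((Equiv.ofInjective e he).sumCongr (Equiv.refl _)).trans (Equiv.Set.sumCompl _))

def piComplProdEquiv (he : Injective e) : ((((range e)ᶜ : Set ι) → ℝ) × (κ → ℝ)) ≃ᵐ (ι → ℝ) :=
  (MeasurableEquiv.sumPiEquivProdPi fun _ => ℝ).symm.trans
    (MeasurableEquiv.piCongrLeft (fun _ => ℝ) (complSumEquiv he))

theorem measurePreserving_piComplProdEquiv [Fintype ι] [Fintype κ] (he : Injective e) :
    MeasurePreserving (piComplProdEquiv he) volume volume :=
  (volume_measurePreserving_piCongrLeft (fun _ => ℝ) _).comp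
    (volume_measurePreserving_sumPiEquivProdPi_symm fun _ => ℝ)

theorem piComplProdEquiv_apply_compl (he : Injective e) (v : ((range e)ᶜ : Set ι) → ℝ)
    (u : κ → ℝ) (m : ((range e)ᶜ : Set ι)) : piComplProdEquiv he (v, u) m = v m :=
  Equiv.piCongrLeft_sumInl (fun _ => ℝ) (complSumEquiv he) v u m

theorem piComplProdEquiv_apply_range (he : Injective e) (v : ((range e)ᶜ : Set ι) → ℝ)
    (u : κ → ℝ) (j : κ) :
    piComplProdEquiv he (v, u) (e j) = u j :=
  Equiv.piCongrLeft_sumInr (fun _ => ℝ) (complSumEquiv he) v u j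

theorem piComplProdEquiv_eq_add_extend (he : Injective e) (v : ((range e)ᶜ : Set ι) → ℝ)
    (u : κ → ℝ) :
    piComplProdEquiv he (v, u) = piComplProdEquiv he (v, 0) + extend e u 0 := by
  funext i
  obtain ⟨m | j, rfl⟩ := (complSumEquiv he).surjective i
  · have hm : ¬∃ j, e j = m := fun ⟨j, h⟩ => m.2 ⟨j, h⟩
    change piComplProdEquiv he (v, u) m = piComplProdEquiv he (v, 0) m + extend e u 0 m
    rw [piComplProdEquiv_apply_compl, piComplProdEquiv_apply_compl, extend_apply' _ _ _ hm,
      Pi.zero_apply, add_zero]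
  · change piComplProdEquiv he (v, u) (e j) =
      piComplProdEquiv he (v, 0) (e j) + extend e u 0 (e j)
    rw [piComplProdEquiv_apply_range, piComplProdEquiv_apply_range, he.extend_apply, Pi.zero_apply,
      zero_add]

theorem setLIntegral_univ_pi_le_of_lintegral_extend_le [Fintype ι] [Fintype κ]
    (he : Injective e) (T : Set ℝ) (F : (ι → ℝ) → ℝ≥0∞) {B : ℝ≥0∞}
    (hB : ∀ s, ∫⁻ u : κ → ℝ, F (s + extend e u 0) ≤ B) :
    ∫⁻ s in univ.pi fun _ => T, F s ≤ volume T ^ (Fintype.card ι - Fintype.card κ) * B := by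
  set ψ := piComplProdEquiv he
  have hpre : ψ ⁻¹' univ.pi (fun _ => T) ⊆ univ.pi (fun _ => T) ×ˢ univ :=
    fun x hx => ⟨fun m _ => piComplProdEquiv_apply_compl he x.1 x.2 m ▸ hx (m : ι) trivial,
      trivial⟩
  have hcard : Fintype.card ((range e)ᶜ : Set ι) = Fintype.card ι - Fintype.card κ := by
    rw [Fintype.card_compl_set, Set.card_range_of_injective he]
  calc ∫⁻ s in univ.pi fun _ => T, F s
      = ∫⁻ x in ψ ⁻¹' univ.pi (fun _ => T), F (ψ x) :=
        ((measurePreserving_piComplProdEquiv he).setLIntegral_comp_preimage_emb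
          ψ.measurableEmbedding F _).symm
    _ ≤ ∫⁻ x in univ.pi (fun _ => T) ×ˢ univ, F (ψ x) := lintegral_mono_set hpre
    _ ≤ ∫⁻ v in univ.pi (fun _ => T), ∫⁻ u, F (ψ (v, u)) := by
        rw [Measure.volume_eq_prod, ← Measure.prod_restrict, Measure.restrict_univ]
        exact lintegral_prod_le _
    _ ≤ ∫⁻ _ in univ.pi (fun _ => T), B := lintegral_mono fun v =>
        (lintegral_congr fun u => congrArg F (piComplProdEquiv_eq_add_extend he v u)).trans_le
          (hB _)
    _ = volume T ^ (Fintype.card ι - Fintype.card κ) * B := by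
        rw [setLIntegral_const, volume_pi_pi, Finset.prod_const, Finset.card_univ, hcard, mul_comm]

end SplitCoordinates

theorem setLIntegral_prod_affine_le {ι κ : Type*} [Fintype ι] [Fintype κ] [DecidableEq κ]
    {A : Matrix κ ι ℝ} {e : κ → ι} (he : Injective e) (hdet : 1 ≤ |(A.submatrix id e).det|)
    {g : ℝ → ℝ} (hg : Integrable g) (hgm : Measurable g) (hg0 : ∀ t, 0 ≤ g t)
    (T : Set ℝ) (ξ c : κ → ℝ) :
    ∫⁻ s in univ.pi fun _ => T, ∏ j, ENNReal.ofReal (g (ξ j - ((A *ᵥ s) j + c j))) ≤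
      volume T ^ (Fintype.card ι - Fintype.card κ) *
        ENNReal.ofReal ((∫ t, g t) ^ Fintype.card κ) := by
  refine setLIntegral_univ_pi_le_of_lintegral_extend_le he T _ fun s => ?_
  convert lintegral_prod_sub_mulVec_le _ hdet hg hgm hg0 (ξ - c - A *ᵥ s) using 6 with u j
  simp only [mulVec_add_extend he, Pi.add_apply, Pi.sub_apply]
  ring

section Bracket

variable {χ : ℝ → ℝ} (hχ_le : ∀ t, χ t ≤ 1) (hχ1 : ∀ t : ℝ, t ≤ 1 → χ t = 1)
  (hχ2 : ∀ t : ℝ, 2 ≤ t → χ t = 0)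
include hχ_le hχ1 hχ2

theorem one_add_div_three_le_jb {t : ℝ} (ht : 0 ≤ t) : (1 + t) / 3 ≤ jb χ t := by
  rw [jb, abs_of_nonneg ht]
  rcases le_or_gt t 1 with h1 | h1
  · rw [hχ1 t h1]; linarith
  rcases le_or_gt 2 t with h2 | h2
  · rw [hχ2 t h2]; linarith
  nlinarith [hχ_le t]

theorem jb_pos {t : ℝ} (ht : 0 ≤ t) : 0 < jb χ t :=
  (by positivity : (0 : ℝ) < (1 + t) / 3).trans_le (one_add_div_three_le_jb hχ_le hχ1 hχ2 ht)

theorem jb_mul_abs_rpow_neg_le {r lam : ℝ} (hr : 0 ≤ r) (hlam : 0 ≤ lam) (x : ℝ) :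
    jb χ (lam * |x|) ^ (-r) ≤ 3 ^ r * (1 + |lam * x|) ^ (-r) := by
  have ht : 0 ≤ lam * |x| := by positivity
  calc jb χ (lam * |x|) ^ (-r) ≤ ((1 + lam * |x|) / 3) ^ (-r) :=
        Real.rpow_le_rpow_of_nonpos (by positivity) (one_add_div_three_le_jb hχ_le hχ1 hχ2 ht)
          (neg_nonpos.mpr hr)
    _ = 3 ^ r * (1 + |lam * x|) ^ (-r) := by
        rw [Real.div_rpow (by positivity) (by norm_num), Real.rpow_neg (by norm_num : (0 : ℝ) ≤ 3),
          div_inv_eq_mul, abs_mul, abs_of_nonneg hlam, mul_comm]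

theorem enorm_prod_jb_rpow_neg_le {ι : Type*} [Fintype ι] {r lam : ℝ} (hr : 0 ≤ r)
    (hlam : 0 ≤ lam) (x : ι → ℝ) :
    ‖∏ j, jb χ (lam * |x j|) ^ (-r)‖ₑ ≤ ∏ j, ENNReal.ofReal (3 ^ r * (1 + |lam * x j|) ^ (-r)) := by
  have hjb : ∀ j, 0 ≤ jb χ (lam * |x j|) ^ (-r) := fun j =>
    Real.rpow_nonneg (jb_pos hχ_le hχ1 hχ2 (by positivity)).le _
  rw [Real.enorm_eq_ofReal (Finset.prod_nonneg fun j _ => hjb j),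
    ENNReal.ofReal_prod_of_nonneg fun j _ => hjb j]
  exact Finset.prod_le_prod' fun j _ =>
    ENNReal.ofReal_le_ofReal (jb_mul_abs_rpow_neg_le hχ_le hχ1 hχ2 hr hlam _)

end Bracket

theorem stmt15_general (χ : ℝ → ℝ)
    (hχ01 : ∀ t, 0 ≤ χ t ∧ χ t ≤ 1) (hχ1 : ∀ t : ℝ, t ≤ 1 → χ t = 1)
    (hχ2 : ∀ t : ℝ, 2 ≤ t → χ t = 0)
    (K q : ℕ) (r : ℝ) (hr : 1 < r) (σ : ℝ) (hσ : 0 < σ) :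
    ∃ C > (0 : ℝ), ∀ (A : Matrix (Fin q) (Fin K) ℝ) (c : Fin q → ℝ) (ks : Fin q → Fin K),
      Function.Injective ks →
      1 ≤ |Matrix.det (Matrix.of fun j j' : Fin q => A j (ks j'))| →
      ∀ lam : ℝ, 1 ≤ lam → ∀ ξ : Fin q → ℝ,
        (∫ s in Set.univ.pi fun _ : Fin K => Set.Icc (-σ) σ,
            ∏ j : Fin q, jb χ (lam * |ξ j - (∑ k, A j k * s k + c j)|) ^ (-r)) ≤
          C * lam ^ (-(q : ℝ)) := by
  have hI := integral_one_add_abs_rpow_neg_pos hr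
  set I := ∫ t : ℝ, (1 + |t|) ^ (-r)
  refine ⟨(3 ^ r * I) ^ q * (2 * σ) ^ (K - q), by positivity, ?_⟩
  intro A c ks hks hdet lam hlam ξ
  have hlam0 : 0 < lam := by linarith
  set g : ℝ → ℝ := fun t => 3 ^ r * (1 + |lam * t|) ^ (-r)
  have hg : Integrable g :=
    ((integrable_one_add_abs_rpow_neg hr).comp_mul_left' hlam0.ne').const_mul _
  have hg_integral : ∫ t, g t = 3 ^ r * I * lam⁻¹ := by
    rw [integral_const_mul, integral_one_add_abs_mul_rpow_neg r hlam0]; ring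
  refine integral_le_of_enorm_le_of_lintegral_le (by positivity)
    (fun s => enorm_prod_jb_rpow_neg_le (fun t => (hχ01 t).2) hχ1 hχ2 (by linarith) hlam0.le _)
    ((setLIntegral_prod_affine_le hks hdet hg (by fun_prop) (fun t => by positivity) _ ξ c).trans_eq
      ?_)
  rw [Real.volume_Icc, sub_neg_eq_add, ← two_mul, Fintype.card_fin, Fintype.card_fin, hg_integral,
    ← ENNReal.ofReal_pow (by linarith), ← ENNReal.ofReal_mul (by positivity),
    Real.rpow_neg hlam0.le, Real.rpow_natCast]
  congr 1
  ring

/-- the key integral estimate over the parameter box. If the affine map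
`Φ(s)_j = ∑_k A j k · s k + c j` admits distinct indices `k(1),…,k(q)` for which the corresponding
`q × q` minor of its linear part has `|det| ≥ 1`, then
`∫_{[-σ,σ]^K} ∏_j ⟨λ|ξ_j - Φ_j(s)|⟩^{-r} ds ≤ C λ^{-q}` uniformly in `λ ≥ 1` and `ξ`. -/
theorem stmt15 (χ : ℝ → ℝ) (hχs : ContDiff ℝ (⊤ : ℕ∞) χ)
    (hχ01 : ∀ t, 0 ≤ χ t ∧ χ t ≤ 1) (hχ1 : ∀ t : ℝ, t ≤ 1 → χ t = 1)
    (hχ2 : ∀ t : ℝ, 2 ≤ t → χ t = 0)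
    (K q : ℕ) (hq : 1 ≤ q) (hqK : q ≤ K) (r : ℝ) (hr : 1 < r) (σ : ℝ) (hσ : 0 < σ) :
    ∃ C > (0 : ℝ), ∀ (A : Matrix (Fin q) (Fin K) ℝ) (c : Fin q → ℝ) (ks : Fin q → Fin K),
      Function.Injective ks →
      1 ≤ |Matrix.det (Matrix.of fun j j' : Fin q => A j (ks j'))| →
      ∀ lam : ℝ, 1 ≤ lam → ∀ ξ : Fin q → ℝ,
        (∫ s in Set.univ.pi fun _ : Fin K => Set.Icc (-σ) σ,
            ∏ j : Fin q, jb χ (lam * |ξ j - (∑ k, A j k * s k + c j)|) ^ (-r)) ≤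
          C * lam ^ (-(q : ℝ)) :=
  stmt15_general χ hχ01 hχ1 hχ2 K q r hr σ hσ
end
end
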